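/- arXiv:1507.02975 — 4 statements merged into one kernel-verified Lean document; each statement's English description precedes it below -/
import Mathlib

section
/- (Repudiation bound, case e_C > s_a) Suppose a string of length L contains exactly ceil(e_C * L) marked positions (mismatches), and a uniformly random subset of size L/2 is selected (L even). If e_C > s_a, the probability that the selected subset contains fewer than s_a * L / 2 marked positions is at most exp(-(e_C - s_a)^2 * L). -/
/-!
The number `X` of marked positions in a uniformly random `n`-subset of an `N`-set containing `m`
marked positions is hypergeometric. Its factorial moments satisfy
`E[C(X, j)] = C(m, j) C(n, j) / C(N, j) ≤ C(n, j) (m / N) ^ j`, so for `t ≥ 1` the binomial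
expansion `t ^ X = ∑ C(X, j) (t - 1) ^ j` gives `E[t ^ X] ≤ (1 + (t - 1) m / N) ^ n`, the
generating function of `Bin(n, m / N)` (Hoeffding, Chvátal). For `0 < s ≤ 1` the same bound
follows by applying this to the unmarked positions with `t = s⁻¹`. Hoeffding's lemma for a
Bernoulli variable bounds `1 - p + p e^{-λ}` by `exp (-p λ + λ² / 8)`, and the Chernoff bound
with `λ = 4τ` gives `P(X ≤ n (m / N - τ)) ≤ exp (-2 n τ²)`; take `n = L / 2`.
-/

open Finset MeasureTheory ProbabilityTheory Real

theorem one_sub_add_mul_exp_neg_le {p : ℝ} (hp0 : 0 ≤ p) (hp1 : p ≤ 1) (h : ℝ) :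
    1 - p + p * exp (-h) ≤ exp (-p * h + h ^ 2 / 8) := by
  let X : Bool → ℝ := fun b => if b then 1 else 0
  have hoeffding : p * exp (-h * (1 - p)) + (1 - p) * exp (-h * (0 - p)) ≤ exp (h ^ 2 / 8) := by
    convert (hasSubgaussianMGF_of_mem_Icc (X := X) (μ := Ber(true, false, ⟨p, hp0, hp1⟩))
      (a := 0) (b := 1) (by fun_prop) (ae_of_all _ fun b => by cases b <;> simp [X])).mgf_le (-h)
      using 1
    · simp [mgf, X, integral_bernoulliMeasure]
    · norm_num; ring
  calc 1 - p + p * exp (-h)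
      = p * exp (-p * h + -h * (1 - p)) + (1 - p) * exp (-p * h + -h * (0 - p)) := by
        rw [show -p * h + -h * (1 - p) = -h by ring, show -p * h + -h * (0 - p) = 0 by ring,
          exp_zero]
        ring
    _ = exp (-p * h) * (p * exp (-h * (1 - p)) + (1 - p) * exp (-h * (0 - p))) := by
        rw [exp_add, exp_add]; ring
    _ ≤ exp (-p * h) * exp (h ^ 2 / 8) := by gcongr
    _ = exp (-p * h + h ^ 2 / 8) := by rw [← exp_add]

namespace Nat

theorem choose_mul_pow_le_choose_mul_pow {m N : ℕ} (hmN : m ≤ N) (j : ℕ) :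
    m.choose j * N ^ j ≤ N.choose j * m ^ j := by
  have hdesc : m.descFactorial j * N ^ j ≤ N.descFactorial j * m ^ j := by
    induction j with
    | zero => simp
    | succ j ih =>
      have hstep : (m - j) * N ≤ (N - j) * m := by
        rcases le_or_gt j m with hjm | hmj
        · zify [hjm, hjm.trans hmN]; nlinarith
        · simp [Nat.sub_eq_zero_of_le hmj.le]
      rw [descFactorial_succ, descFactorial_succ, pow_succ, pow_succ]
      calc (m - j) * m.descFactorial j * (N ^ j * N)
          = m.descFactorial j * N ^ j * ((m - j) * N) := by ring
        _ ≤ N.descFactorial j * m ^ j * ((N - j) * m) := Nat.mul_le_mul ih hstep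
        _ = (N - j) * N.descFactorial j * (m ^ j * m) := by ring
  rw [descFactorial_eq_factorial_mul_choose, descFactorial_eq_factorial_mul_choose,
    mul_assoc, mul_assoc] at hdesc
  exact Nat.le_of_mul_le_mul_left hdesc (factorial_pos j)

theorem pow_eq_sum_range_choose_mul_sub_one_pow {R : Type*} [CommRing R] (t : R) {k n : ℕ}
    (hkn : k ≤ n) : t ^ k = ∑ j ∈ range (n + 1), (k.choose j : R) * (t - 1) ^ j := by
  have hsub : range (k + 1) ⊆ range (n + 1) := range_subset_range.mpr (by omega)
  rw [← sum_subset hsub fun j _ hj => by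
    rw [Nat.choose_eq_zero_of_lt (by simpa using hj), Nat.cast_zero, zero_mul]]
  conv_lhs => rw [show t = (t - 1) + 1 by ring, add_pow]
  exact sum_congr rfl fun j _ => by ring

end Nat

theorem choose_mul_choose_sub_le {N n m j : ℕ} (hjn : j ≤ n) (hmN : m ≤ N) (hN : 0 < N) :
    ((m.choose j * (N - j).choose (n - j) : ℕ) : ℝ)
      ≤ N.choose n * n.choose j * ((m : ℝ) / N) ^ j := by
  have hm : (m.choose j : ℝ) ≤ N.choose j * ((m : ℝ) / N) ^ j := by
    rw [div_pow, mul_div_assoc', le_div_iff₀ (by positivity)]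
    exact_mod_cast Nat.choose_mul_pow_le_choose_mul_pow hmN j
  rw [← Nat.cast_mul (N.choose n), Nat.choose_mul hjn, Nat.cast_mul, Nat.cast_mul]
  calc (m.choose j : ℝ) * (N - j).choose (n - j)
      ≤ N.choose j * ((m : ℝ) / N) ^ j * (N - j).choose (n - j) := by gcongr
    _ = N.choose j * (N - j).choose (n - j) * ((m : ℝ) / N) ^ j := by ring

section Hypergeometric

variable {α : Type*} [Fintype α] [DecidableEq α]

theorem sum_powersetCard_choose_card_inter (M : Finset α) {n j : ℕ} (hjn : j ≤ n) :
    ∑ S ∈ univ.powersetCard n, (#(S ∩ M)).choose j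
      = (#M).choose j * (Fintype.card α - j).choose (n - j) := by
  have hchoose (S : Finset α) :
      (#(S ∩ M)).choose j = #((M.powersetCard j).filter (· ⊆ S)) := by
    rw [← card_powersetCard]
    congr 1
    ext J
    simp only [mem_powersetCard, mem_filter, subset_inter_iff]
    tauto
  have hsupersets (J : Finset α) (hJ : J ∈ M.powersetCard j) :
      #((univ.powersetCard n).filter (J ⊆ ·)) = (Fintype.card α - j).choose (n - j) := by
    obtain ⟨-, hJcard⟩ := mem_powersetCard.mp hJ
    rw [card_filter_powersetCard_subset J univ n (subset_univ J) (hJcard ▸ hjn), card_univ,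
      hJcard]
  simp only [hchoose, card_filter]
  rw [sum_comm, ← card_powersetCard j M, card_eq_sum_ones, sum_mul, one_mul]
  refine sum_congr rfl fun J hJ => ?_
  rw [← card_filter, hsupersets J hJ]

variable [Nonempty α]

theorem sum_powersetCard_pow_card_inter_le_of_one_le (M : Finset α) (n : ℕ) {t : ℝ}
    (ht : 1 ≤ t) :
    ∑ S ∈ univ.powersetCard n, t ^ #(S ∩ M)
      ≤ (Fintype.card α).choose n * (1 + (t - 1) * (#M / Fintype.card α)) ^ n := by
  set N := Fintype.card α
  set p : ℝ := #M / N
  have hexpand (S : Finset α) (hS : S ∈ univ.powersetCard n) :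
      t ^ #(S ∩ M) = ∑ j ∈ range (n + 1), ((#(S ∩ M)).choose j : ℝ) * (t - 1) ^ j :=
    Nat.pow_eq_sum_range_choose_mul_sub_one_pow t
      ((card_le_card inter_subset_left).trans (mem_powersetCard_univ.mp hS).le)
  calc ∑ S ∈ univ.powersetCard n, t ^ #(S ∩ M)
      = ∑ j ∈ range (n + 1),
          ((∑ S ∈ univ.powersetCard n, (#(S ∩ M)).choose j : ℕ) : ℝ) * (t - 1) ^ j := by
        rw [sum_congr rfl hexpand, sum_comm]
        simp only [Nat.cast_sum, sum_mul]
    _ ≤ ∑ j ∈ range (n + 1), N.choose n * n.choose j * p ^ j * (t - 1) ^ j := by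
        refine sum_le_sum fun j hj => ?_
        have hjn : j ≤ n := Nat.lt_succ_iff.mp (mem_range.mp hj)
        rw [sum_powersetCard_choose_card_inter M hjn]
        exact mul_le_mul_of_nonneg_right (choose_mul_choose_sub_le hjn (card_le_univ M)
          Fintype.card_pos) (pow_nonneg (sub_nonneg.mpr ht) j)
    _ = N.choose n * (1 + (t - 1) * p) ^ n := by
        rw [show 1 + (t - 1) * p = (t - 1) * p + 1 by ring, add_pow, mul_sum]
        exact sum_congr rfl fun j _ => by rw [one_pow, mul_pow]; ring

theorem sum_powersetCard_pow_card_inter_le_of_le_one (M : Finset α) (n : ℕ) {s : ℝ}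
    (hs0 : 0 < s) (hs1 : s ≤ 1) :
    ∑ S ∈ univ.powersetCard n, s ^ #(S ∩ M)
      ≤ (Fintype.card α).choose n
          * (1 - #M / Fintype.card α + #M / Fintype.card α * s) ^ n := by
  set N := Fintype.card α
  have hsplit (S : Finset α) (hS : S ∈ univ.powersetCard n) :
      s ^ #(S ∩ M) = s ^ n * s⁻¹ ^ #(S ∩ Mᶜ) := by
    have hcard := card_inter_add_card_sdiff S M
    rw [mem_powersetCard_univ.mp hS, sdiff_eq_inter_compl] at hcard
    rw [← hcard, pow_add, inv_pow, mul_inv_cancel_right₀ (pow_ne_zero _ hs0.ne')]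
  have hNpos : (0 : ℝ) < N := by exact_mod_cast Fintype.card_pos
  calc ∑ S ∈ univ.powersetCard n, s ^ #(S ∩ M)
      = s ^ n * ∑ S ∈ univ.powersetCard n, s⁻¹ ^ #(S ∩ Mᶜ) := by
        rw [sum_congr rfl hsplit, mul_sum]
    _ ≤ s ^ n * (N.choose n * (1 + (s⁻¹ - 1) * (#Mᶜ / N)) ^ n) := by
        gcongr
        exact sum_powersetCard_pow_card_inter_le_of_one_le Mᶜ n (one_le_inv₀ hs0 |>.mpr hs1)
    _ = N.choose n * (1 - #M / N + #M / N * s) ^ n := by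
        rw [card_compl, Nat.cast_sub (card_le_univ M), mul_left_comm, ← mul_pow]
        congr 2
        field_simp
        ring

theorem card_filter_card_inter_le_sub_le (M : Finset α) (n : ℕ) {τ : ℝ} (hτ : 0 ≤ τ) :
    (#{S ∈ univ.powersetCard n | (#(S ∩ M) : ℝ) ≤ n * (#M / Fintype.card α - τ)} : ℝ)
      ≤ (Fintype.card α).choose n * exp (-2 * n * τ ^ 2) := by
  set N := Fintype.card α
  set p : ℝ := #M / N
  have hp0 : 0 ≤ p := by positivity
  have hp1 : p ≤ 1 := div_le_one_of_le₀ (by exact_mod_cast card_le_univ M) (Nat.cast_nonneg N)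
  set B := {S ∈ (univ : Finset α).powersetCard n | (#(S ∩ M) : ℝ) ≤ n * (p - τ)}
  -- Chernoff bound with the optimal parameter `λ = 4τ`.
  set lam := 4 * τ
  have hmarkov : #B * exp (-lam * (n * (p - τ)))
      ≤ ∑ S ∈ univ.powersetCard n, exp (-lam) ^ #(S ∩ M) := by
    rw [← nsmul_eq_mul, ← sum_const]
    refine (sum_le_sum fun S hS => ?_).trans
      (sum_le_sum_of_subset_of_nonneg (filter_subset _ _) fun _ _ _ => by positivity)
    rw [← exp_nat_mul, exp_le_exp]
    nlinarith [(mem_filter.mp hS).2]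
  have hchernoff :
      #B * exp (-lam * (n * (p - τ))) ≤ N.choose n * exp (n * (-p * lam + lam ^ 2 / 8)) :=
    calc #B * exp (-lam * (n * (p - τ)))
        ≤ N.choose n * (1 - p + p * exp (-lam)) ^ n :=
          hmarkov.trans (sum_powersetCard_pow_card_inter_le_of_le_one M n (exp_pos _)
            (exp_le_one_iff.mpr (by linarith)))
      _ ≤ N.choose n * exp (-p * lam + lam ^ 2 / 8) ^ n := by
          gcongr
          exact one_sub_add_mul_exp_neg_le hp0 hp1 lam
      _ = N.choose n * exp (n * (-p * lam + lam ^ 2 / 8)) := by rw [← exp_nat_mul]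
  rw [← le_div_iff₀ (exp_pos _), mul_div_assoc, ← exp_sub] at hchernoff
  refine hchernoff.trans_eq ?_
  congr 2
  ring

end Hypergeometric

theorem repudiation_lower_tail_bound_general
    (L : ℕ) (hL : 0 < L) (hLeven : Even L)
    (eC sa : ℝ) (hlt : sa < eC)
    (M : Finset (Fin L)) (hM : M.card = ⌈eC * L⌉₊) :
    (({S : Finset (Fin L) | S.card = L / 2 ∧
          ((S ∩ M).card : ℝ) < sa * L / 2}.ncard : ℝ) / (L.choose (L / 2))
      ≤ Real.exp (-(eC - sa) ^ 2 * L)) := by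
  have : Nonempty (Fin L) := Fin.pos_iff_nonempty.mp hL
  have hhalf : ((L / 2 : ℕ) : ℝ) = L / 2 := by
    rw [Nat.cast_div_charZero (even_iff_two_dvd.mp hLeven), Nat.cast_ofNat]
  have hdensity : eC ≤ #M / L := by
    rw [le_div_iff₀ (by exact_mod_cast hL), hM]
    exact Nat.le_ceil _
  have hsub : {S : Finset (Fin L) | S.card = L / 2 ∧ ((S ∩ M).card : ℝ) < sa * L / 2}
      ⊆ ↑{S ∈ (univ : Finset (Fin L)).powersetCard (L / 2) |
          (#(S ∩ M) : ℝ) ≤ (L / 2 : ℕ) * (#M / L - (eC - sa))} := by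
    rintro S ⟨hcard, hfew⟩
    simp only [coe_filter, mem_powersetCard_univ, Set.mem_ofPred_eq, hhalf]
    exact ⟨hcard, by nlinarith⟩
  have htail := card_filter_card_inter_le_sub_le M (L / 2) (sub_nonneg.mpr hlt.le)
  rw [Fintype.card_fin, show -2 * ((L / 2 : ℕ) : ℝ) * (eC - sa) ^ 2 = -(eC - sa) ^ 2 * L by
    rw [hhalf]; ring] at htail
  rw [div_le_iff₀ (by exact_mod_cast Nat.choose_pos (Nat.div_le_self L 2)),
    mul_comm _ (L.choose _ : ℝ)]
  refine le_trans ?_ htail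
  exact_mod_cast (Set.ncard_le_ncard hsub (finite_toSet _)).trans_eq (Set.ncard_coe_finset _)

/-- Repudiation bound, case `e_C > s_a`. A string of length `L`
(`L` even) contains exactly `⌈e_C L⌉` marked (mismatch) positions; a uniformly
random subset of size `L/2` is selected. If `e_C > s_a`, the probability that
the selected subset contains fewer than `s_a L / 2` marked positions is at most
`exp(-(e_C - s_a)² L)`. -/
theorem repudiation_lower_tail_bound
    (L : ℕ) (hL : 0 < L) (hLeven : Even L)
    (eC sa : ℝ) (hsa : 0 ≤ sa) (heC : eC ≤ 1) (hlt : sa < eC)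
    (M : Finset (Fin L)) (hM : M.card = ⌈eC * L⌉₊) :
    (({S : Finset (Fin L) | S.card = L / 2 ∧
          ((S ∩ M).card : ℝ) < sa * L / 2}.ncard : ℝ) / (L.choose (L / 2))
      ≤ Real.exp (-(eC - sa) ^ 2 * L)) :=
  repudiation_lower_tail_bound_general L hL hLeven eC sa hlt M hM
end

section
/- (Repudiation bound, case e <= s_a) Suppose a string of length L contains exactly floor(e * L) marked positions with e <= s_a, and a uniformly random subset of size L/2 is selected (L even). If s_v > s_a, the probability that the selected subset contains more than s_v * L / 2 marked positions is at most exp(-(s_v - e)^2 * L), and hence at most exp(-(s_v - s_a)^2 * L). -/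
/-!
This is Hoeffding's inequality for sampling without replacement, proved by the Chernoff method.
Let `X` be the number of marked points in a uniform `n`-subset of an `N`-set with `m = p N`
marked points. Double counting gives the factorial moments
`E (X choose j) = C(n, j) C(m, j) / C(N, j)`, which are at most the binomial ones
`C(n, j) p ^ j`; summing against `λ ^ j` yields `E (1 + λ) ^ X ≤ (1 + p λ) ^ n`. Hoeffding's
lemma for a Bernoulli variable bounds `1 - p + p e ^ s` by `exp (p s + s² / 8)`, and Markov's
inequality with `s = 4 (t - p)` gives `P (X ≥ t n) ≤ exp (-2 n (t - p) ²)`. For `N = 2 n` and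
`p ≤ e ≤ s_a < t = s_v` this is at most `exp (-(s_v - e) ² N) ≤ exp (-(s_v - s_a) ² N)`.
-/

open Finset Real

namespace Nat

theorem descFactorial_mul_pow_le_pow_mul_descFactorial {m N : ℕ} (h : m ≤ N) (j : ℕ) :
    m.descFactorial j * N ^ j ≤ m ^ j * N.descFactorial j := by
  induction j with
  | zero => simp
  | succ j ih =>
    have step : (m - j) * N ≤ m * (N - j) := by
      rw [Nat.sub_mul, Nat.mul_sub]
      exact Nat.sub_le_sub_left (Nat.mul_comm m j ▸ Nat.mul_le_mul_left j h) _
    rw [descFactorial_succ, descFactorial_succ, pow_succ, pow_succ]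
    calc (m - j) * m.descFactorial j * (N ^ j * N)
        = m.descFactorial j * N ^ j * ((m - j) * N) := by ring
      _ ≤ m ^ j * N.descFactorial j * (m * (N - j)) := Nat.mul_le_mul ih step
      _ = m ^ j * m * ((N - j) * N.descFactorial j) := by ring

theorem choose_mul_pow_le_pow_mul_choose {m N : ℕ} (h : m ≤ N) (j : ℕ) :
    m.choose j * N ^ j ≤ m ^ j * N.choose j := by
  have := descFactorial_mul_pow_le_pow_mul_descFactorial h j
  rw [descFactorial_eq_factorial_mul_choose, descFactorial_eq_factorial_mul_choose] at this
  refine Nat.le_of_mul_le_mul_left ?_ (factorial_pos j)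
  linarith

end Nat

theorem one_add_pow_eq_sum_range_choose {R : Type*} [CommSemiring R] (x : R) {k n : ℕ}
    (hk : k ≤ n) : (1 + x) ^ k = ∑ j ∈ range (n + 1), x ^ j * k.choose j := by
  rw [add_comm 1 x, add_pow]
  refine sum_subset (range_subset_range.2 (by omega)) (fun j _ hj => ?_) |>.trans
    (sum_congr rfl fun j _ => by simp)
  simp [Nat.choose_eq_zero_of_lt (show k < j by simpa using hj)]

open MeasureTheory ProbabilityTheory in
theorem one_sub_add_mul_exp_le_exp {p : ℝ} (hp0 : 0 ≤ p) (hp1 : p ≤ 1) (s : ℝ) :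
    1 - p + p * exp s ≤ exp (p * s + s ^ 2 / 8) := by
  let μ : Measure Bool := (1 - p).toNNReal • .dirac false + p.toNNReal • .dirac true
  have : IsProbabilityMeasure μ := ⟨by
    simp [μ, ← ENNReal.coe_add, ← Real.toNNReal_add (sub_nonneg.2 hp1) hp0]⟩
  have integral_eq (f : Bool → ℝ) : ∫ b, f b ∂μ = (1 - p) * f false + p * f true := by
    rw [integral_add_measure .of_finite .of_finite]
    simp [NNReal.smul_def, hp0, hp1]
  let X : Bool → ℝ := fun b => if b then 1 else 0
  have hoeffding := (hasSubgaussianMGF_of_mem_Icc (X := X) (μ := μ) (a := 0) (b := 1)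
    Measurable.of_discrete.aemeasurable (ae_of_all _ fun b => by cases b <;> simp [X])).mgf_le s
  simp only [mgf, integral_eq, X] at hoeffding
  norm_num at hoeffding
  have cancel : exp (p * s) * exp (-(s * p)) = 1 := by rw [← exp_add]; ring_nf; exact exp_zero
  have shift : exp (p * s) * exp (s * (1 - p)) = exp s := by rw [← exp_add]; ring_nf
  calc 1 - p + p * exp s
      = exp (p * s) * ((1 - p) * exp (-(s * p)) + p * exp (s * (1 - p))) := by
        linear_combination (p - 1) * cancel - p * shift
    _ ≤ exp (p * s) * exp (1 / 4 * s ^ 2 / 2) := by gcongr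
    _ = exp (p * s + s ^ 2 / 8) := by rw [← exp_add]; ring_nf

section Hypergeometric

variable {α : Type*} [Fintype α] [DecidableEq α]

theorem sum_choose_card_inter (M : Finset α) {n j : ℕ} (hj : j ≤ n) :
    ∑ S ∈ powersetCard n univ, (#(S ∩ M)).choose j
      = (#M).choose j * (Fintype.card α - j).choose (n - j) := by
  have choose_eq (S : Finset α) :
      (#(S ∩ M)).choose j = #((powersetCard j M).bipartiteAbove (fun S T => T ⊆ S) S) := by
    rw [← card_powersetCard, bipartiteAbove]
    congr 1
    ext T
    simp only [mem_powersetCard, mem_filter, subset_inter_iff]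
    tauto
  have supersets_eq : ∀ T ∈ powersetCard j M,
      #((powersetCard n univ).bipartiteBelow (fun S T => T ⊆ S) T)
        = (Fintype.card α - j).choose (n - j) := by
    intro T hT
    rw [mem_powersetCard] at hT
    rw [bipartiteBelow, card_filter_powersetCard_subset T univ n (subset_univ T) (hT.2 ▸ hj),
      card_univ, hT.2]
  simp only [choose_eq]
  rw [sum_card_bipartiteAbove_eq_sum_card_bipartiteBelow, sum_congr rfl supersets_eq, sum_const,
    card_powersetCard, smul_eq_mul]

variable [Nonempty α]

theorem sum_choose_card_inter_le (M : Finset α) {n j : ℕ}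
    (hn : n ≤ Fintype.card α) (hj : j ≤ n) :
    ∑ S ∈ powersetCard n univ, ((#(S ∩ M)).choose j : ℝ)
      ≤ (Fintype.card α).choose n * n.choose j * (#M / Fintype.card α) ^ j := by
  set N := Fintype.card α
  have hN : (0 : ℝ) < N ^ j := pow_pos (by exact_mod_cast Fintype.card_pos) j
  have key : (#M).choose j * (N - j).choose (n - j) * N ^ j
      ≤ N.choose n * n.choose j * #M ^ j := by
    refine Nat.le_of_mul_le_mul_right ?_ (Nat.choose_pos (hj.trans hn))
    calc (#M).choose j * (N - j).choose (n - j) * N ^ j * N.choose j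
        = N.choose j * (N - j).choose (n - j) * ((#M).choose j * N ^ j) := by ring
      _ ≤ N.choose j * (N - j).choose (n - j) * (#M ^ j * N.choose j) :=
        Nat.mul_le_mul_left _ (Nat.choose_mul_pow_le_pow_mul_choose (card_le_univ M) j)
      _ = N.choose n * n.choose j * #M ^ j * N.choose j := by rw [Nat.choose_mul hj]; ring
  rw [← Nat.cast_sum, sum_choose_card_inter M hj, div_pow, ← mul_div_assoc, le_div_iff₀ hN]
  exact_mod_cast key

theorem sum_one_add_pow_card_inter_le (M : Finset α) {n : ℕ}
    (hn : n ≤ Fintype.card α) {x : ℝ} (hx : 0 ≤ x) :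
    ∑ S ∈ powersetCard n univ, (1 + x) ^ #(S ∩ M)
      ≤ (Fintype.card α).choose n * (1 + #M / Fintype.card α * x) ^ n := by
  set p : ℝ := #M / Fintype.card α
  calc ∑ S ∈ powersetCard n univ, (1 + x) ^ #(S ∩ M)
      = ∑ j ∈ range (n + 1),
          x ^ j * ∑ S ∈ powersetCard n univ, ((#(S ∩ M)).choose j : ℝ) := by
        rw [sum_congr rfl fun S hS => one_add_pow_eq_sum_range_choose x (n := n) ?_, sum_comm]
        · simp only [mul_sum]
        · exact (card_le_card inter_subset_left).trans (mem_powersetCard.1 hS).2.le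
    _ ≤ ∑ j ∈ range (n + 1), x ^ j * ((Fintype.card α).choose n * n.choose j * p ^ j) := by
        gcongr with j hj
        exact sum_choose_card_inter_le M hn (Nat.lt_succ_iff.1 (mem_range.1 hj))
    _ = (Fintype.card α).choose n * (1 + p * x) ^ n := by
        rw [add_comm 1 (p * x), add_pow, mul_sum]
        refine sum_congr rfl fun j _ => ?_
        ring

theorem card_filter_powersetCard_le_choose_mul_exp (M : Finset α) {n : ℕ}
    (hn : n ≤ Fintype.card α) {t : ℝ} (ht : #M / Fintype.card α ≤ t) :
    (#{S ∈ powersetCard n univ | t * n ≤ #(S ∩ M)} : ℝ)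
      ≤ (Fintype.card α).choose n * exp (-2 * n * (t - #M / Fintype.card α) ^ 2) := by
  set p : ℝ := #M / Fintype.card α
  have hp0 : 0 ≤ p := by positivity
  have hp1 : p ≤ 1 := div_le_one_of_le₀ (by exact_mod_cast card_le_univ M) (by positivity)
  -- `s` minimises `p s + s² / 8 - t s`, the exponent per sample of the Chernoff bound.
  set s := 4 * (t - p)
  have hs : 0 ≤ s := by linarith
  have markov : (#{S ∈ powersetCard n univ | t * n ≤ #(S ∩ M)} : ℝ) * exp (s * (t * n))
      ≤ ∑ S ∈ powersetCard n univ, exp s ^ #(S ∩ M) := by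
    rw [← nsmul_eq_mul]
    refine (card_nsmul_le_sum _ _ _ fun S hS => ?_).trans
      (sum_le_sum_of_subset_of_nonneg (filter_subset _ _) fun _ _ _ => by positivity)
    rw [← exp_nat_mul, mul_comm]
    exact exp_le_exp.2 (mul_le_mul_of_nonneg_right (mem_filter.1 hS).2 hs)
  have mgf_le : ∑ S ∈ powersetCard n univ, exp s ^ #(S ∩ M)
      ≤ (Fintype.card α).choose n * exp (n * (p * s + s ^ 2 / 8)) := by
    have := sum_one_add_pow_card_inter_le M hn (sub_nonneg.2 (one_le_exp hs))
    simp only [add_sub_cancel] at this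
    refine this.trans (mul_le_mul_of_nonneg_left ?_ (by positivity))
    rw [exp_nat_mul]
    refine pow_le_pow_left₀ (by nlinarith [one_le_exp hs]) ?_ n
    linarith [one_sub_add_mul_exp_le_exp hp0 hp1 s]
  rw [← mul_le_mul_iff_left₀ (exp_pos (s * (t * n)))]
  calc _ ≤ _ := markov.trans mgf_le
    _ = _ := by rw [mul_assoc, ← exp_add]; congr 2; simp only [s]; ring

end Hypergeometric

theorem repudiation_upper_tail_bound_general
    (L : ℕ) (hL : 0 < L) (hLeven : Even L)
    (e sa sv : ℝ) (he0 : 0 ≤ e) (hesa : e ≤ sa) (hsasv : sa < sv)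
    (M : Finset (Fin L)) (hM : M.card = ⌊e * L⌋₊) :
    (({S : Finset (Fin L) | S.card = L / 2 ∧
          sv * L / 2 < ((S ∩ M).card : ℝ)}.ncard : ℝ) / (L.choose (L / 2))
        ≤ Real.exp (-(sv - e) ^ 2 * L)) ∧
    (({S : Finset (Fin L) | S.card = L / 2 ∧
          sv * L / 2 < ((S ∩ M).card : ℝ)}.ncard : ℝ) / (L.choose (L / 2))
        ≤ Real.exp (-(sv - sa) ^ 2 * L)) := by
  have : NeZero L := ⟨hL.ne'⟩
  set p : ℝ := #M / L
  have hpe : p ≤ e :=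
    div_le_of_le_mul₀ (by positivity) he0 (hM ▸ Nat.floor_le (by positivity))
  obtain ⟨n, rfl⟩ := hLeven
  have half : (n + n) / 2 = n := by omega
  have tail := card_filter_powersetCard_le_choose_mul_exp M (n := n) (by simp) (t := sv)
    (by rw [Fintype.card_fin]; exact hpe.trans (hesa.trans hsasv.le))
  rw [Fintype.card_fin] at tail
  have weaken (u : ℝ) (hu0 : 0 ≤ u) (hu : u ≤ sv - p) :
      exp (-2 * n * (sv - p) ^ 2) ≤ exp (-u ^ 2 * ↑(n + n)) := by
    have := pow_le_pow_left₀ hu0 hu 2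
    exact exp_le_exp.2 (by push_cast; nlinarith [n.cast_nonneg (α := ℝ)])
  refine ⟨le_trans ?ratio (weaken _ (by linarith) (by linarith)),
    le_trans ?ratio (weaken _ (by linarith) (by linarith))⟩
  rw [half, div_le_iff₀' (by exact_mod_cast Nat.choose_pos (by omega))]
  refine le_trans ?_ tail
  rw [← Set.ncard_coe_finset]
  gcongr
  · exact finite_toSet _
  rintro S ⟨hS, hlt⟩
  simp only [coe_filter, mem_powersetCard, subset_univ, true_and]
  refine ⟨hS, le_of_lt ?_⟩
  push_cast at hlt
  linarith

/-- Repudiation bound, case `e ≤ s_a`. A string of length `L`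
(`L` even) contains exactly `⌊e L⌋` marked positions with `e ≤ s_a`; a
uniformly random subset of size `L/2` is selected. If `s_v > s_a`, the
probability that the selected subset contains more than `s_v L / 2` marked
positions is at most `exp(-(s_v - e)² L)`, and hence at most
`exp(-(s_v - s_a)² L)`. -/
theorem repudiation_upper_tail_bound
    (L : ℕ) (hL : 0 < L) (hLeven : Even L)
    (e sa sv : ℝ) (he0 : 0 ≤ e) (hesa : e ≤ sa) (hsasv : sa < sv) (hsv : sv ≤ 1)
    (M : Finset (Fin L)) (hM : M.card = ⌊e * L⌋₊) :
    (({S : Finset (Fin L) | S.card = L / 2 ∧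
          sv * L / 2 < ((S ∩ M).card : ℝ)}.ncard : ℝ) / (L.choose (L / 2))
        ≤ Real.exp (-(sv - e) ^ 2 * L)) ∧
    (({S : Finset (Fin L) | S.card = L / 2 ∧
          sv * L / 2 < ((S ∩ M).card : ℝ)}.ncard : ℝ) / (L.choose (L / 2))
        ≤ Real.exp (-(sv - sa) ^ 2 * L)) :=
  repudiation_upper_tail_bound_general L hL hLeven e sa sv he0 hesa hsasv M hM
end

section
/- (Optimal repudiation strategy bound) Let 0 <= s_a < s_v <= 1 and L be an even positive integer. For any choice of error rates e_B, e_C in [0,1] controlled by Alice, the probability of repudiation — Bob accepting (both halves of his key have mismatch rate < s_a) while Charlie rejects (some half has mismatch rate > s_v) under the random symmetrization described below — is at most 2 * exp(-(1/4) * (s_v - s_a)^2 * L). -/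
/-!
If Bob accepts and Charlie rejects, then one of the halves Charlie checks (his kept half `T` of
his mismatch set `C`, or Bob's forwarded half `Sᶜ` of `B`) holds more than `s_v L/2` mismatches
while the complementary half holds fewer than `s_a L/2`; so that half exceeds its mean `#D/2` by
at least `(s_v - s_a) L/4`. For a uniformly random half this is an upper deviation of a
hypergeometric variable. Chvátal's bound dominates its moment generating function by the
binomial one (by induction on the sample size, via Chebyshev's sum inequality), Hoeffding's
lemma bounds the latter, and the Chernoff argument gives probability at most
`exp(-(s_v - s_a)² L/4)`; a union bound over the two halves gives the factor `2`.
-/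

open Finset Real

-- Hoeffding's lemma for a Bernoulli(`q`) variable, whose MGF is the left-hand side.
open MeasureTheory ProbabilityTheory in
theorem one_sub_add_mul_exp_le {q : ℝ} (hq0 : 0 ≤ q) (hq1 : q ≤ 1) (y : ℝ) :
    1 - q + q * exp y ≤ exp (q * y + y ^ 2 / 8) := by
  set μ : Measure ℝ := bernoulliMeasure 1 0 ⟨q, hq0, hq1⟩
  have hmean : μ[id] = q := by simp [μ, integral_bernoulliMeasure]
  have hX : ∀ᵐ ω ∂μ, id ω ∈ Set.Icc (0 : ℝ) 1 := by
    rw [ae_iff]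
    simp [μ, bernoulliMeasure_def]
  have h : q * exp (y * (1 - q)) + (1 - q) * exp (-(y * q)) ≤ exp (y ^ 2 / 8) := by
    have h := (hasSubgaussianMGF_of_mem_Icc aemeasurable_id hX).mgf_le y
    rw [mgf, hmean, integral_bernoulliMeasure] at h
    convert h using 2 <;> norm_num
    ring
  have e1 : exp (q * y) * exp (y * (1 - q)) = exp y := by rw [← exp_add]; ring_nf
  have e2 : exp (q * y) * exp (-(y * q)) = 1 := by rw [← exp_add]; ring_nf; exact exp_zero
  calc 1 - q + q * exp y
      = exp (q * y) * (q * exp (y * (1 - q)) + (1 - q) * exp (-(y * q))) := by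
        linear_combination (-q) * e1 - (1 - q) * e2
    _ ≤ exp (q * y) * exp (y ^ 2 / 8) := by gcongr
    _ = exp (q * y + y ^ 2 / 8) := (exp_add _ _).symm

section Sampling

variable {α : Type*} [Fintype α] [DecidableEq α]

theorem sum_powersetCard_succ_nsmul {M : Type*} [AddCommMonoid M] (n : ℕ) (f : Finset α → M) :
    (n + 1) • ∑ S ∈ powersetCard (n + 1) univ, f S =
      ∑ S ∈ powersetCard n univ, ∑ x ∈ Sᶜ, f (insert x S) := by
  calc (n + 1) • ∑ S ∈ powersetCard (n + 1) univ, f S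
      = ∑ S ∈ powersetCard (n + 1) univ, ∑ _x ∈ S, f S := by
        rw [smul_sum]
        refine sum_congr rfl fun S hS => ?_
        rw [sum_const, (mem_powersetCard.1 hS).2]
    _ = _ := by
        rw [sum_sigma', sum_sigma']
        refine sum_nbij' (fun p => ⟨p.1.erase p.2, p.2⟩) (fun p => ⟨insert p.2 p.1, p.2⟩)
          ?_ ?_ ?_ ?_ ?_ <;> rintro ⟨S, x⟩ h <;>
          simp_all [card_erase_of_mem, card_insert_of_notMem]

theorem card_mul_sum_card_inter_powersetCard (D : Finset α) (n : ℕ) :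
    Fintype.card α * ∑ S ∈ powersetCard n univ, #(D ∩ S) =
      n * #D * (Fintype.card α).choose n := by
  rcases n with _ | k
  · simp
  have hdeg (a : α) :
      #{S ∈ powersetCard (k + 1) univ | a ∈ S} = (Fintype.card α - 1).choose k := by
    simpa using card_filter_powersetCard_subset {a} univ (k + 1) (subset_univ _) (by simp)
  rw [sum_card_inter fun a _ => hdeg a]
  rcases h : Fintype.card α with _ | M
  · simp
  · rw [Nat.add_sub_cancel, mul_left_comm, Nat.add_one_mul_choose_eq]
    ring

theorem sum_compl_pow_card_inter_insert {R : Type*} [CommRing R] (B S : Finset α) (t : R) :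
    ∑ x ∈ Sᶜ, t ^ #(B ∩ insert x S) = t ^ #(B ∩ S) * (#Sᶜ + (t - 1) * #(B \ S)) := by
  have hterm : ∀ x ∈ Sᶜ, t ^ #(B ∩ insert x S) =
      t ^ #(B ∩ S) * (1 + (t - 1) * if x ∈ B then 1 else 0) := by
    intro x hx
    by_cases hxB : x ∈ B
    · rw [inter_insert_of_mem hxB,
        card_insert_of_notMem fun h => mem_compl.1 hx (mem_inter.1 h).2]
      simp [hxB, pow_succ]
    · simp [inter_insert_of_notMem hxB, hxB]
  rw [sum_congr rfl hterm, ← mul_sum, sum_add_distrib, ← mul_sum, sum_boole]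
  congr 4
  · simp
  · congr 1; ext x; simp [and_comm]

variable (B : Finset α) {t : ℝ}

theorem card_mul_sum_card_sdiff_powersetCard (n : ℕ) :
    (Fintype.card α : ℝ) * ∑ S ∈ powersetCard n univ, (#(B \ S) : ℝ) =
      (Fintype.card α - n) * #B * (Fintype.card α).choose n := by
  have hmean := congrArg (Nat.cast (R := ℝ)) (card_mul_sum_card_inter_powersetCard B n)
  have hsplit : ∑ S ∈ powersetCard n univ, ((#(B \ S) : ℝ) + #(B ∩ S)) =
      #(powersetCard n (univ : Finset α)) * #B := by
    simp [← Nat.cast_add, card_sdiff_add_card_inter, sum_const]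
  rw [sum_add_distrib, card_powersetCard, card_univ] at hsplit
  push_cast at hmean hsplit
  linear_combination (Fintype.card α : ℝ) * hsplit - hmean

theorem card_mul_add_one_mul_sum_pow_le (ht : 1 ≤ t) {n : ℕ} (hn : n ≤ Fintype.card α) :
    Fintype.card α * (n + 1) * ∑ S ∈ powersetCard (n + 1) univ, t ^ #(B ∩ S) ≤
      (Fintype.card α - n) * (Fintype.card α - #B + #B * t) *
        ∑ S ∈ powersetCard n univ, t ^ #(B ∩ S) := by
  set P := powersetCard n (univ : Finset α)
  set g : Finset α → ℝ := fun S => (Fintype.card α - n) + (t - 1) * #(B \ S)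
  have hext : (n + 1) * ∑ S ∈ powersetCard (n + 1) univ, t ^ #(B ∩ S) =
      ∑ S ∈ P, t ^ #(B ∩ S) * g S := by
    rw [← Nat.cast_succ, ← nsmul_eq_mul, sum_powersetCard_succ_nsmul]
    refine sum_congr rfl fun S hS => ?_
    rw [sum_compl_pow_card_inter_insert, card_compl, (mem_powersetCard.1 hS).2,
      Nat.cast_sub hn]
  have hanti : AntivaryOn (fun S => t ^ #(B ∩ S)) g P := by
    intro S _ S' _ hlt
    have hsdiff : #(B \ S) < #(B \ S') := by
      by_contra! h
      have := mul_le_mul_of_nonneg_left (Nat.cast_le.2 h) (sub_nonneg.2 ht)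
      simp only [g] at hlt
      linarith
    have := card_inter_add_card_sdiff B S
    have := card_inter_add_card_sdiff B S'
    exact pow_le_pow_right₀ ht (by omega)
  have hmean : Fintype.card α * ∑ S ∈ P, g S =
      #P * ((Fintype.card α - n) * (Fintype.card α - #B + #B * t)) := by
    have := card_mul_sum_card_sdiff_powersetCard B n
    simp only [g, sum_add_distrib, ← mul_sum, sum_const, nsmul_eq_mul, P, card_powersetCard,
      card_univ] at this ⊢
    linear_combination (t - 1) * this
  have hP : (0 : ℝ) < #P := by
    simpa [P, card_powersetCard] using Nat.choose_pos hn
  refine le_of_mul_le_mul_left ?_ hP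
  calc _ = Fintype.card α * (#P * ∑ S ∈ P, t ^ #(B ∩ S) * g S) := by rw [← hext]; ring
    _ ≤ Fintype.card α * ((∑ S ∈ P, t ^ #(B ∩ S)) * ∑ S ∈ P, g S) := by
        exact mul_le_mul_of_nonneg_left hanti.card_mul_sum_le_sum_mul_sum (by positivity)
    _ = _ := by rw [mul_left_comm, hmean]; ring

-- Chvátal: the hypergeometric moment generating function is dominated by the binomial one.
theorem card_pow_mul_sum_pow_card_inter_le (ht : 1 ≤ t) {n : ℕ} (hn : n ≤ Fintype.card α) :
    (Fintype.card α : ℝ) ^ n * ∑ S ∈ powersetCard n univ, t ^ #(B ∩ S) ≤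
      (Fintype.card α).choose n * (Fintype.card α - #B + #B * t) ^ n := by
  induction n with
  | zero => simp
  | succ n ih =>
    set N := Fintype.card α
    set c : ℝ := N - #B + #B * t
    have hc : 0 ≤ c := by
      have : (#B : ℝ) ≤ N := by exact_mod_cast card_le_univ B
      nlinarith
    have hnN : (n : ℝ) ≤ N := by exact_mod_cast (by omega : n ≤ N)
    have hchoose : (N.choose (n + 1) : ℝ) * (n + 1) = N.choose n * (N - n) := by
      rw [← Nat.cast_sub (by omega)]
      exact_mod_cast Nat.choose_succ_right_eq N n
    refine le_of_mul_le_mul_left ?_ (n.cast_add_one_pos : (0 : ℝ) < n + 1)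
    calc ((n : ℝ) + 1) * (N ^ (n + 1) * ∑ S ∈ powersetCard (n + 1) univ, t ^ #(B ∩ S))
        = N ^ n * (N * (n + 1) * ∑ S ∈ powersetCard (n + 1) univ, t ^ #(B ∩ S)) := by ring
      _ ≤ N ^ n * ((N - n) * c * ∑ S ∈ powersetCard n univ, t ^ #(B ∩ S)) := by
        gcongr _ * ?_
        exact card_mul_add_one_mul_sum_pow_le B ht (by omega)
      _ = (N - n) * c * (N ^ n * ∑ S ∈ powersetCard n univ, t ^ #(B ∩ S)) := by ring
      _ ≤ (N - n) * c * (N.choose n * c ^ n) := by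
        exact mul_le_mul_of_nonneg_left (ih (by omega)) (mul_nonneg (by linarith) hc)
      _ = (n + 1) * (N.choose (n + 1) * c ^ (n + 1)) := by
        rw [pow_succ]; linear_combination (-c ^ (n + 1)) * hchoose

theorem card_filter_le_card_inter_powersetCard_le [Nonempty α] {n : ℕ}
    (hn : n ≤ Fintype.card α) (r : ℝ) {s : ℝ} (hs : 0 ≤ s) :
    #{S ∈ powersetCard n univ | r ≤ #(B ∩ S)} ≤
      (Fintype.card α).choose n *
        exp (n * (#B / Fintype.card α * s + s ^ 2 / 8) - s * r) := by
  set N := Fintype.card α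
  set q : ℝ := #B / N
  have hN : (0 : ℝ) < N := by exact_mod_cast Fintype.card_pos
  have hq0 : 0 ≤ q := by positivity
  have hq1 : q ≤ 1 := div_le_one_of_le₀ (by exact_mod_cast card_le_univ B) hN.le
  have hmarkov : #{S ∈ powersetCard n univ | r ≤ #(B ∩ S)} * exp (s * r) ≤
      ∑ S ∈ powersetCard n univ, exp s ^ #(B ∩ S) := by
    rw [← nsmul_eq_mul, ← sum_const]
    refine (sum_le_sum fun S hS => ?_).trans
      (sum_le_sum_of_subset_of_nonneg (filter_subset _ _) fun _ _ _ => by positivity)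
    rw [← exp_nat_mul, exp_le_exp, mul_comm]
    exact mul_le_mul_of_nonneg_right (mem_filter.1 hS).2 hs
  have hchvatal : ∑ S ∈ powersetCard n univ, exp s ^ #(B ∩ S) ≤
      N.choose n * (1 - q + q * exp s) ^ n := by
    have h := card_pow_mul_sum_pow_card_inter_le B (one_le_exp hs) hn
    have hc : (N : ℝ) - #B + #B * exp s = N * (1 - q + q * exp s) := by
      simp only [q]; field_simp
    rw [hc, mul_pow, mul_left_comm] at h
    exact le_of_mul_le_mul_left h (by positivity)
  have hhoeffding : (1 - q + q * exp s) ^ n ≤ exp (n * (q * s + s ^ 2 / 8)) := by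
    rw [exp_nat_mul]
    have : 0 ≤ 1 - q + q * exp s := by nlinarith [exp_pos s]
    gcongr
    exact one_sub_add_mul_exp_le hq0 hq1 s
  rw [exp_sub, ← mul_div_assoc, le_div_iff₀ (exp_pos _)]
  calc _ ≤ _ := hmarkov
    _ ≤ _ := hchvatal
    _ ≤ _ := by gcongr

theorem card_filter_half_card_add_le_card_inter_le (D : Finset α) {n : ℕ}
    (hα : Fintype.card α = 2 * n) (hn : 0 < n) {ε : ℝ} (hε : 0 ≤ ε) :
    #{S ∈ powersetCard n univ | #D / 2 + ε * n ≤ #(D ∩ S)} ≤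
      (Fintype.card α).choose n * exp (-2 * ε ^ 2 * n) := by
  have : Nonempty α := Fintype.card_pos_iff.1 (by omega)
  -- `4 ε` is the optimal Chernoff parameter.
  refine (card_filter_le_card_inter_powersetCard_le D (by omega) _
    (by positivity : 0 ≤ 4 * ε)).trans_eq ?_
  rw [hα]
  push_cast
  field_simp
  ring_nf

theorem card_filter_compl_powersetCard (p : Finset α → Prop) [DecidablePred p] {n : ℕ}
    (hα : Fintype.card α = 2 * n) :
    #{S ∈ powersetCard n univ | p Sᶜ} = #{S ∈ powersetCard n univ | p S} := by
  refine card_nbij' compl compl ?_ ?_ (fun _ _ => compl_compl _) (fun _ _ => compl_compl _) <;>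
    intro S hS <;> simp_all [card_compl] <;> omega

theorem card_filter_half_card_add_le_card_inter_compl_or_le (B C : Finset α) {n : ℕ}
    (hα : Fintype.card α = 2 * n) (hn : 0 < n) {ε : ℝ} (hε : 0 ≤ ε) :
    #{p ∈ powersetCard n univ ×ˢ powersetCard n univ |
        #B / 2 + ε * n ≤ #(B ∩ p.1ᶜ) ∨ #C / 2 + ε * n ≤ #(C ∩ p.2)} ≤
      2 * (Fintype.card α).choose n ^ 2 * exp (-2 * ε ^ 2 * n) := by
  have hB := card_filter_half_card_add_le_card_inter_le B hα hn hε
  have hC := card_filter_half_card_add_le_card_inter_le C hα hn hε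
  rw [← card_filter_compl_powersetCard _ hα] at hB
  rw [filter_or, filter_product_left (fun S => #B / 2 + ε * n ≤ #(B ∩ Sᶜ)),
    filter_product_right (fun T => #C / 2 + ε * n ≤ #(C ∩ T))]
  refine (Nat.cast_le.2 (card_union_le _ _)).trans ?_
  push_cast [card_product, card_powersetCard, card_univ]
  calc _ ≤ (Fintype.card α).choose n * exp (-2 * ε ^ 2 * n) * (Fintype.card α).choose n +
        (Fintype.card α).choose n * ((Fintype.card α).choose n * exp (-2 * ε ^ 2 * n)) := by
        gcongr
    _ = _ := by ring

theorem half_card_add_le_card_inter {D T : Finset α} {a b : ℝ} (ha : a < #(D ∩ T))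
    (hb : #(D ∩ Tᶜ) < b) : #D / 2 + (a - b) / 2 ≤ #(D ∩ T) := by
  have h := card_inter_add_card_sdiff D T
  rw [sdiff_eq_inter_compl] at h
  have h' : (#(D ∩ T) : ℝ) + #(D ∩ Tᶜ) = #D := by exact_mod_cast h
  linarith

end Sampling

theorem repudiation_probability_bound_general
    (L : ℕ) (hL : 0 < L) (hLeven : Even L)
    (sa sv : ℝ) (hsasv : sa < sv)
    (B C : Finset (Fin L)) :
    (({p : Finset (Fin L) × Finset (Fin L) |
          p.1.card = L / 2 ∧ p.2.card = L / 2 ∧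
          -- Bob accepts both halves of his key
          (((B ∩ p.1).card : ℝ) < sa * L / 2) ∧
          (((C ∩ p.2ᶜ).card : ℝ) < sa * L / 2) ∧
          -- Charlie rejects some half of his key
          ((sv * L / 2 < ((C ∩ p.2).card : ℝ)) ∨
            (sv * L / 2 < ((B ∩ p.1ᶜ).card : ℝ)))}.ncard : ℝ)
        / ((L.choose (L / 2) : ℝ) * (L.choose (L / 2) : ℝ))
      ≤ 2 * Real.exp (-(1 / 4) * (sv - sa) ^ 2 * L)) := by
  obtain ⟨n, rfl⟩ := hLeven
  have hα : Fintype.card (Fin (n + n)) = 2 * n := by simp; omega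
  have hn : 0 < n := by omega
  rw [show (n + n) / 2 = n by omega]
  set ε := (sv - sa) / 2
  have hε : 0 ≤ ε := by simp only [ε]; linarith
  have hdev {D T : Finset (Fin (n + n))} (ha : sv * ↑(n + n) / 2 < #(D ∩ T))
      (hb : #(D ∩ Tᶜ) < sa * ↑(n + n) / 2) : #D / 2 + ε * n ≤ #(D ∩ T) := by
    refine le_of_eq_of_le ?_ (half_card_add_le_card_inter ha hb)
    push_cast
    ring
  have hexp : -2 * ε ^ 2 * n = -(1 / 4) * (sv - sa) ^ 2 * ↑(n + n) := by
    simp only [ε]; push_cast; ring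
  have hchoose : (0 : ℝ) < (n + n).choose n := by exact_mod_cast Nat.choose_pos (by omega)
  rw [div_le_iff₀ (mul_pos hchoose hchoose), ← hexp]
  refine le_trans ?_ ((card_filter_half_card_add_le_card_inter_compl_or_le B C hα hn hε).trans_eq
    (by rw [Fintype.card_fin]; ring))
  rw [← Set.ncard_coe_finset]
  refine Nat.cast_le.2 (Set.ncard_le_ncard ?_ (Finset.finite_toSet _))
  rintro ⟨S, T⟩ ⟨hS, hT, hBS, hCT, hrej | hrej⟩ <;>
    simp only [coe_filter, mem_product, mem_powersetCard, subset_univ, true_and, Set.mem_ofPred_eq,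
      hS, hT]
  · exact Or.inr (hdev hrej hCT)
  · exact Or.inl (hdev hrej (by rwa [compl_compl]))

/-- Optimal repudiation strategy bound. Alice's declaration has
mismatch sets `B`, `C` (arbitrary, i.e. any error rates `e_B`, `e_C` she may
choose) with Bob's and Charlie's `L`-bit keys. Bob and Charlie each keep a
uniformly random half (`L/2` positions, sets `S_B`, `S_C`) of their own key and
forward the other half. Bob accepts iff both his halves (his kept positions
`S_B` and the positions `S_Cᶜ` forwarded by Charlie) have fewer than
`s_a L/2` mismatches; Charlie rejects iff some of his halves (`S_C` or `S_Bᶜ`)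
has more than `s_v L/2` mismatches. The probability of repudiation (Bob accepts
and Charlie rejects) is at most `2 exp(-(1/4)(s_v - s_a)² L)`. -/
theorem repudiation_probability_bound
    (L : ℕ) (hL : 0 < L) (hLeven : Even L)
    (sa sv : ℝ) (hsa0 : 0 ≤ sa) (hsasv : sa < sv) (hsv1 : sv ≤ 1)
    (B C : Finset (Fin L)) :
    (({p : Finset (Fin L) × Finset (Fin L) |
          p.1.card = L / 2 ∧ p.2.card = L / 2 ∧
          -- Bob accepts both halves of his key
          (((B ∩ p.1).card : ℝ) < sa * L / 2) ∧
          (((C ∩ p.2ᶜ).card : ℝ) < sa * L / 2) ∧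
          -- Charlie rejects some half of his key
          ((sv * L / 2 < ((C ∩ p.2).card : ℝ)) ∨
            (sv * L / 2 < ((B ∩ p.1ᶜ).card : ℝ)))}.ncard : ℝ)
        / ((L.choose (L / 2) : ℝ) * (L.choose (L / 2) : ℝ))
      ≤ 2 * Real.exp (-(1 / 4) * (sv - sa) ^ 2 * L)) :=
  repudiation_probability_bound_general L hL hLeven sa sv hsasv B C
end

section
/- (Classicality of optimal smoothing) Let tau_{XF} be a classical (diagonal in a fixed product basis) bipartite density operator. Then for any state tau'_{XF} in the epsilon-ball (trace distance) around tau_{XF} and any unit-trace state sigma'_F, there exist a classical state tau-bar_{XF} in the epsilon-ball around tau_{XF} and a classical unit-trace state sigma_F such that H_min(tau-bar_{XF} | sigma_F) >= H_min(tau'_{XF} | sigma'_F). Consequently the smooth min-entropy H_min^eps(X|F)_tau is achieved by classical states. -/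
/-!
Dephasing in the product basis, `A ↦ diagonal A.diag`, is a pinching: it fixes the classical `τ`,
does not increase the trace norm of a Hermitian matrix, preserves positive semidefiniteness and
sends `1 ⊗ σ'` to `1 ⊗ (dephased σ')`. So dephasing `τ'` and `σ'` keeps the state in the `ε`-ball
and keeps every feasible `λ` of `H_min(τ'|σ')` feasible, hence can only raise the supremum.
When that supremum is Lean's junk value `0` (of the empty set, or of all of `ℝ` when `τ' = 0`),
the pair formed by `τ` and its `F`-marginal does at least as well, since `λ = 0` is feasible for it.
-/

open Matrix ComplexOrder Kronecker

/-- The trace norm `‖A‖₁ = tr √(AᴴA)` of a complex matrix. -/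
noncomputable def traceNorm {n : Type*} [Fintype n] [DecidableEq n]
    (A : Matrix n n ℂ) : ℝ :=
  ((Matrix.posSemidef_conjTranspose_mul_self A).1.eigenvectorUnitary.1 *
    diagonal ((RCLike.ofReal : ℝ → ℂ) ∘ (√·) ∘ (Matrix.posSemidef_conjTranspose_mul_self A).1.eigenvalues) *
    (star (Matrix.posSemidef_conjTranspose_mul_self A).1.eigenvectorUnitary : Matrix n n ℂ)).trace.re

/-- The (conditional) min-entropy of a bipartite operator `ρ` on `X ⊗ F`
relative to an operator `σ` on `F`:
`H_min(ρ|σ) := sup {λ : 2^{-λ} (1_X ⊗ σ) - ρ ≥ 0}`. -/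
noncomputable def Hmin {X F : Type*} [Fintype X] [DecidableEq X]
    [Fintype F] [DecidableEq F]
    (ρ : Matrix (X × F) (X × F) ℂ) (σ : Matrix F F ℂ) : ℝ :=
  sSup {l : ℝ | ((((2 : ℝ) ^ (-l) : ℝ) : ℂ) • ((1 : Matrix X X ℂ) ⊗ₖ σ) - ρ).PosSemidef}

section TraceNorm

open scoped MatrixOrder

variable {n : Type*} [Fintype n] [DecidableEq n]

lemma traceNorm_eq_re_trace_abs (A : Matrix n n ℂ) : traceNorm A = (CFC.abs A).trace.re := by
  rw [CFC.abs, CFC.sqrt_eq_real_sqrt _ (star_mul_self_nonneg A), cfcₙ_eq_cfc, star_eq_conjTranspose,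
    (posSemidef_conjTranspose_mul_self A).1.cfc_eq]
  rfl

lemma traceNorm_diagonal (d : n → ℂ) : traceNorm (diagonal d) = ∑ i, ‖d i‖ := by
  have habs : CFC.abs (diagonal d) = diagonal fun i => (‖d i‖ : ℂ) := by
    rw [CFC.abs, CFC.sqrt_eq_iff _ _ (star_mul_self_nonneg _)
      (PosSemidef.diagonal fun i => by simp).nonneg, star_eq_conjTranspose, diagonal_conjTranspose,
      diagonal_mul_diagonal, diagonal_mul_diagonal]
    congr 1
    funext i
    simp [← Complex.normSq_eq_conj_mul_self, Complex.normSq_eq_norm_sq, sq]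
  rw [traceNorm_eq_re_trace_abs, habs, trace_diagonal, Complex.re_sum]
  simp

lemma traceNorm_zero : traceNorm (0 : Matrix n n ℂ) = 0 := by
  simpa using traceNorm_diagonal (0 : n → ℂ)

lemma Matrix.IsHermitian.trace_cfc {A : Matrix n n ℂ} (hA : A.IsHermitian) (f : ℝ → ℝ) :
    (cfc f A).trace = ∑ i, (f (hA.eigenvalues i) : ℂ) := by
  rw [hA.cfc_eq, IsHermitian.cfc, Unitary.conjStarAlgAut_apply, trace_mul_cycle,
    Unitary.coe_star_mul_self, one_mul, trace_diagonal]
  rfl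

lemma Matrix.IsHermitian.traceNorm_eq_sum_abs_eigenvalues {A : Matrix n n ℂ} (hA : A.IsHermitian) :
    traceNorm A = ∑ i, |hA.eigenvalues i| := by
  rw [traceNorm_eq_re_trace_abs, CFC.abs_eq_cfc_norm A hA.isSelfAdjoint, hA.trace_cfc,
    Complex.re_sum]
  simp

lemma Matrix.IsHermitian.sum_norm_sq_eigenvectorBasis {A : Matrix n n ℂ} (hA : A.IsHermitian)
    (k : n) : ∑ i, ‖hA.eigenvectorBasis k i‖ ^ 2 = 1 := by
  rw [← EuclideanSpace.norm_sq_eq, hA.eigenvectorBasis.orthonormal.1 k, one_pow]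

lemma Matrix.IsHermitian.apply_self_eq_sum {A : Matrix n n ℂ} (hA : A.IsHermitian) (i : n) :
    A i i = ∑ k, (hA.eigenvalues k : ℂ) * (‖hA.eigenvectorBasis k i‖ ^ 2 : ℝ) := by
  conv_lhs => rw [hA.spectral_theorem, Unitary.conjStarAlgAut_apply]
  rw [mul_apply]
  refine Finset.sum_congr rfl fun k _ => ?_
  rw [mul_diagonal, Complex.sq_norm, Complex.normSq_eq_conj_mul_self]
  simp only [star_apply, eigenvectorUnitary_apply, Function.comp_apply, RCLike.star_def,
    RCLike.ofReal_eq_complex_ofReal]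
  ring

/-- Pinching: each diagonal entry is a convex combination of the eigenvalues, with the squared
moduli of an eigenvector row as weights. -/
lemma Matrix.IsHermitian.traceNorm_diagonal_diag_le {A : Matrix n n ℂ} (hA : A.IsHermitian) :
    traceNorm (diagonal A.diag) ≤ traceNorm A := by
  calc traceNorm (diagonal A.diag)
      ≤ ∑ i, ∑ k, |hA.eigenvalues k| * ‖hA.eigenvectorBasis k i‖ ^ 2 := by
        rw [traceNorm_diagonal]
        refine Finset.sum_le_sum fun i _ => ?_
        rw [diag_apply, hA.apply_self_eq_sum]
        refine (norm_sum_le _ _).trans_eq (Finset.sum_congr rfl fun k _ => ?_)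
        simp
    _ = traceNorm A := by
        rw [Finset.sum_comm, hA.traceNorm_eq_sum_abs_eigenvalues]
        simp only [← Finset.mul_sum, hA.sum_norm_sq_eigenvectorBasis, mul_one]

end TraceNorm

lemma Matrix.PosSemidef.diagonal_diag {n R : Type*} [DecidableEq n] [Ring R] [PartialOrder R]
    [StarRing R] [StarOrderedRing R] {A : Matrix n n R} (hA : A.PosSemidef) :
    (diagonal A.diag).PosSemidef :=
  PosSemidef.diagonal fun _ => hA.diag_nonneg

lemma diagonal_diag_smul_one_kronecker_sub {X F R : Type*} [DecidableEq X] [DecidableEq F]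
    [CommRing R] (c : R) (σ : Matrix F F R) (ρ : Matrix (X × F) (X × F) R) :
    diagonal (c • ((1 : Matrix X X R) ⊗ₖ σ) - ρ).diag
      = c • ((1 : Matrix X X R) ⊗ₖ diagonal σ.diag) - diagonal ρ.diag := by
  ext ⟨x, f⟩ ⟨x', f'⟩
  by_cases hx : x = x' <;> by_cases hf : f = f' <;> simp [kroneckerMap_apply, one_apply, hx, hf]

section Marginal

variable {X F : Type*} [Fintype X] [DecidableEq F]

/-- The partial trace `tr_X ρ` when `ρ` is classical. -/
def marginalDiag (ρ : Matrix (X × F) (X × F) ℂ) : Matrix F F ℂ :=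
  diagonal fun f => ∑ x, ρ (x, f) (x, f)

lemma Matrix.PosSemidef.marginalDiag {ρ : Matrix (X × F) (X × F) ℂ} (hρ : ρ.PosSemidef) :
    (marginalDiag ρ).PosSemidef :=
  PosSemidef.diagonal fun _ => Finset.sum_nonneg fun _ _ => hρ.diag_nonneg

lemma trace_marginalDiag [Fintype F] (ρ : Matrix (X × F) (X × F) ℂ) :
    (marginalDiag ρ).trace = ρ.trace := by
  rw [marginalDiag, trace_diagonal, trace, Fintype.sum_prod_type, Finset.sum_comm]
  rfl

end Marginal

section MinEntropy

variable {X F : Type*} [DecidableEq X]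

def hminFeasible (ρ : Matrix (X × F) (X × F) ℂ) (σ : Matrix F F ℂ) : Set ℝ :=
  {l : ℝ | ((((2 : ℝ) ^ (-l) : ℝ) : ℂ) • ((1 : Matrix X X ℂ) ⊗ₖ σ) - ρ).PosSemidef}

lemma Hmin_eq_sSup_hminFeasible [Fintype X] [Fintype F] [DecidableEq F]
    (ρ : Matrix (X × F) (X × F) ℂ) (σ : Matrix F F ℂ) :
    Hmin ρ σ = sSup (hminFeasible ρ σ) :=
  rfl

lemma hminFeasible_subset_dephase [DecidableEq F] (ρ : Matrix (X × F) (X × F) ℂ)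
    (σ : Matrix F F ℂ) : hminFeasible ρ σ ⊆ hminFeasible (diagonal ρ.diag) (diagonal σ.diag) :=
  fun l hl => by
    simpa only [hminFeasible, Set.mem_ofPred_eq, diagonal_diag_smul_one_kronecker_sub] using
      hl.diagonal_diag

lemma bddAbove_hminFeasible [Fintype X] [Fintype F] {ρ : Matrix (X × F) (X × F) ℂ}
    (hρ : ρ.PosSemidef) (hρ0 : ρ ≠ 0) (σ : Matrix F F ℂ) : BddAbove (hminFeasible ρ σ) := by
  obtain ⟨p, hp⟩ : ∃ p, ρ p p ≠ 0 := by
    by_contra! h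
    exact hρ0 (hρ.trace_eq_zero_iff.mp (Finset.sum_eq_zero fun p _ => h p))
  have hρp : 0 < (ρ p p).re := (Complex.pos_iff.mp (hρ.diag_nonneg.lt_of_ne' hp)).1
  refine ⟨Real.logb 2 ((σ p.2 p.2).re / (ρ p p).re), fun l hl => ?_⟩
  have hle : (ρ p p).re ≤ (2 : ℝ) ^ (-l) * (σ p.2 p.2).re := by
    have := (Complex.le_def.mp (hl.diag_nonneg (i := p))).1
    simp_all [hminFeasible]
  have hσp : 0 < (σ p.2 p.2).re :=
    pos_of_mul_pos_right (hρp.trans_le hle) (Real.rpow_pos_of_pos two_pos _).le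
  rw [Real.le_logb_iff_rpow_le one_lt_two (div_pos hσp hρp), le_div_iff₀ hρp, ← neg_neg l,
    Real.rpow_neg zero_le_two, ← div_eq_inv_mul, div_le_iff₀ (Real.rpow_pos_of_pos two_pos _)]
  linarith

lemma Hmin_zero_left [Fintype X] [Fintype F] [DecidableEq F] {σ : Matrix F F ℂ}
    (hσ : σ.PosSemidef) : Hmin (0 : Matrix (X × F) (X × F) ℂ) σ = 0 := by
  have hfeas : hminFeasible (0 : Matrix (X × F) (X × F) ℂ) σ = Set.univ :=
    Set.eq_univ_of_forall fun l => by
      simpa [hminFeasible] using (PosSemidef.one.kronecker hσ).smul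
        (Complex.zero_le_real.mpr (Real.rpow_nonneg zero_le_two (-l)))
  rw [Hmin_eq_sSup_hminFeasible, hfeas, Real.sSup_univ]

lemma Hmin_le_Hmin_dephase [Fintype X] [Fintype F] [DecidableEq F]
    {ρ : Matrix (X × F) (X × F) ℂ} (hρ : ρ.PosSemidef) (hρ0 : ρ ≠ 0) (σ : Matrix F F ℂ)
    (hfeas : (hminFeasible ρ σ).Nonempty) :
    Hmin ρ σ ≤ Hmin (diagonal ρ.diag) (diagonal σ.diag) := by
  have hρ0' : diagonal ρ.diag ≠ 0 := fun h =>
    hρ0 (hρ.trace_eq_zero_iff.mp (by simpa [trace] using congrArg trace h))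
  exact csSup_le_csSup (bddAbove_hminFeasible hρ.diagonal_diag hρ0' _) hfeas
    (hminFeasible_subset_dephase ρ σ)

lemma zero_mem_hminFeasible_marginalDiag [Fintype X] [DecidableEq F]
    {ρ : Matrix (X × F) (X × F) ℂ} (hρ : ρ.PosSemidef) (hρd : ρ.IsDiag) :
    (0 : ℝ) ∈ hminFeasible ρ (marginalDiag ρ) := by
  have hdiag :
      (((((2 : ℝ) ^ (-0 : ℝ) : ℝ) : ℂ) • ((1 : Matrix X X ℂ) ⊗ₖ marginalDiag ρ)) - ρ).IsDiag :=
    ((isDiag_one.kronecker (isDiag_diagonal _)).smul _).sub hρd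
  rw [hminFeasible, Set.mem_ofPred_eq, ← hdiag.diagonal_diag]
  refine PosSemidef.diagonal fun p => ?_
  simpa [marginalDiag, kroneckerMap_apply] using
    Finset.single_le_sum (fun x _ => hρ.diag_nonneg (i := (x, p.2))) (Finset.mem_univ p.1)

lemma Hmin_marginalDiag_nonneg [Fintype X] [Fintype F] [DecidableEq F]
    {ρ : Matrix (X × F) (X × F) ℂ} (hρ : ρ.PosSemidef) (hρ0 : ρ ≠ 0) (hρd : ρ.IsDiag) :
    0 ≤ Hmin ρ (marginalDiag ρ) :=
  le_csSup (bddAbove_hminFeasible hρ hρ0 _) (zero_mem_hminFeasible_marginalDiag hρ hρd)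

end MinEntropy

theorem classical_smoothing_optimal_general
    {X F : Type*} [Fintype X] [DecidableEq X]
    [Fintype F] [DecidableEq F]
    (ε : ℝ) (hε : 0 ≤ ε)
    (τ : Matrix (X × F) (X × F) ℂ)
    (hτ : τ.PosSemidef) (hτtr : τ.trace = 1) (hτdiag : τ.IsDiag)
    (τ' : Matrix (X × F) (X × F) ℂ)
    (hτ' : τ'.PosSemidef) (hτ'ball : traceNorm (τ' - τ) ≤ ε)
    (σ' : Matrix F F ℂ) (hσ' : σ'.PosSemidef) (hσ'tr : σ'.trace = 1) :
    ∃ (τb : Matrix (X × F) (X × F) ℂ) (σ : Matrix F F ℂ),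
      τb.IsDiag ∧ τb.PosSemidef ∧ traceNorm (τb - τ) ≤ ε ∧
      σ.IsDiag ∧ σ.PosSemidef ∧ σ.trace = 1 ∧
      Hmin τ' σ' ≤ Hmin τb σ := by
  by_cases hfeas : (hminFeasible τ' σ').Nonempty ∧ τ' ≠ 0
  · have hball : traceNorm (diagonal τ'.diag - τ) ≤ ε := by
      rw [← hτdiag.diagonal_diag, diagonal_sub]
      exact (hτ'.1.sub hτ.1).traceNorm_diagonal_diag_le.trans hτ'ball
    exact ⟨diagonal τ'.diag, diagonal σ'.diag, isDiag_diagonal _, hτ'.diagonal_diag, hball,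
      isDiag_diagonal _, hσ'.diagonal_diag, (trace_diagonal _).trans hσ'tr,
      Hmin_le_Hmin_dephase hτ' hfeas.2 σ' hfeas.1⟩
  · have hzero : Hmin τ' σ' = 0 := by
      rcases not_and_or.mp hfeas with hempty | hτ'0
      · rw [Hmin_eq_sSup_hminFeasible, Set.not_nonempty_iff_eq_empty.mp hempty, Real.sSup_empty]
      · rw [not_not.mp hτ'0, Hmin_zero_left hσ']
    have hτ0 : τ ≠ 0 := fun h => one_ne_zero (hτtr.symm.trans (h ▸ trace_zero _ _))
    exact ⟨τ, marginalDiag τ, hτdiag, hτ, by rwa [sub_self, traceNorm_zero], isDiag_diagonal _,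
      hτ.marginalDiag, (trace_marginalDiag τ).trans hτtr,
      hzero.trans_le (Hmin_marginalDiag_nonneg hτ hτ0 hτdiag)⟩

/-- Classicality of optimal smoothing. For a classical (diagonal)
bipartite density operator `τ_{XF}`, any `τ'` in the trace-distance `ε`-ball
around `τ` and any unit-trace `σ'_F`, there exist a classical `τ̄` in the
`ε`-ball around `τ` and a classical unit-trace `σ_F` with
`H_min(τ̄|σ) ≥ H_min(τ'|σ')`; hence the smooth min-entropy is achieved by
classical states. -/
theorem classical_smoothing_optimal
    {X F : Type*} [Fintype X] [DecidableEq X] [Nonempty X]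
    [Fintype F] [DecidableEq F] [Nonempty F]
    (ε : ℝ) (hε : 0 ≤ ε)
    (τ : Matrix (X × F) (X × F) ℂ)
    (hτ : τ.PosSemidef) (hτtr : τ.trace = 1) (hτdiag : τ.IsDiag)
    (τ' : Matrix (X × F) (X × F) ℂ)
    (hτ' : τ'.PosSemidef) (hτ'ball : traceNorm (τ' - τ) ≤ ε)
    (σ' : Matrix F F ℂ) (hσ' : σ'.PosSemidef) (hσ'tr : σ'.trace = 1) :
    ∃ (τb : Matrix (X × F) (X × F) ℂ) (σ : Matrix F F ℂ),
      τb.IsDiag ∧ τb.PosSemidef ∧ traceNorm (τb - τ) ≤ ε ∧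
      σ.IsDiag ∧ σ.PosSemidef ∧ σ.trace = 1 ∧
      Hmin τ' σ' ≤ Hmin τb σ :=
  classical_smoothing_optimal_general ε hε τ hτ hτtr hτdiag τ' hτ' hτ'ball σ' hσ' hσ'tr
end
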